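/- arXiv:1807.06805 — 3 statements merged into one kernel-verified Lean document; each statement's English description precedes it below -/
import Mathlib

section
/- For k ∈ ℕ, define h_k : ℝ → ℝ by h_k(y) = e^{-y} y^k / k!. Then for every y ≥ 0: if k ≥ 3, |h_k'''(y)| ≤ 8 (max(y,1))^k / (k−3)!, and if k ≤ 2, |h_k'''(y)| ≤ 8 (max(y,1))^k. -/
/-!
By the Leibniz rule, `(e^{-y} q)''' = ∑ᵢ C(3,i) (-1)^i e^{-y} q^{(3-i)}`. For `y ≥ 0` we have
`e^{-y} ≤ 1`, and every derivative of order `i ≤ 3` of `q = y^k/k!` is `y^{k-i}/(k-i)!` or `0`,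
hence at most `max(y,1)^k/(k-3)!`; the binomial coefficients add up to `2^3 = 8`. When `k ≤ 2`,
the truncated subtraction gives `(k-3)! = 0! = 1`, which is the second case.
-/

open Real Nat

theorem iteratedDeriv_exp_neg (n : ℕ) (x : ℝ) :
    iteratedDeriv n (fun t => exp (-t)) x = (-1) ^ n * exp (-x) := by
  simpa using congrFun (iteratedDeriv_exp_const_mul n (-1)) x

theorem abs_iteratedDeriv_exp_neg_mul_le {g : ℝ → ℝ} {n : ℕ} {x B : ℝ} (hg : ContDiff ℝ n g)
    (hx : 0 ≤ x) (hB : ∀ i ≤ n, |iteratedDeriv i g x| ≤ B) :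
    |iteratedDeriv n (fun t => exp (-t) * g t) x| ≤ 2 ^ n * B := by
  have hexp : ContDiffAt ℝ n (fun t => exp (-t)) x := by fun_prop
  rw [iteratedDeriv_fun_mul hexp hg.contDiffAt]
  calc |∑ i ∈ Finset.range (n + 1), (n.choose i : ℝ) * iteratedDeriv i (fun t => exp (-t)) x
          * iteratedDeriv (n - i) g x|
      ≤ ∑ i ∈ Finset.range (n + 1), (n.choose i : ℝ) * B := by
        refine (Finset.abs_sum_le_sum_abs _ _).trans (Finset.sum_le_sum fun i _ => ?_)
        have hexp : exp (-x) ≤ 1 := exp_le_one_iff.mpr (neg_nonpos.mpr hx)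
        calc |(n.choose i : ℝ) * iteratedDeriv i (fun t => exp (-t)) x * iteratedDeriv (n - i) g x|
            = n.choose i * (exp (-x) * |iteratedDeriv (n - i) g x|) := by
              rw [iteratedDeriv_exp_neg, abs_mul, abs_mul, abs_mul, abs_pow, abs_neg, abs_one,
                one_pow, one_mul, abs_of_nonneg (exp_pos _).le, Nat.abs_cast, mul_assoc]
          _ ≤ n.choose i * (1 * B) := by
              gcongr
              exact hB _ (Nat.sub_le n i)
          _ = n.choose i * B := by rw [one_mul]
    _ = 2 ^ n * B := by rw [← Finset.sum_mul, ← Nat.cast_sum, Nat.sum_range_choose, Nat.cast_pow,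
          Nat.cast_ofNat]

theorem iteratedDeriv_pow_div_factorial (k i : ℕ) (y : ℝ) :
    iteratedDeriv i (fun t : ℝ => t ^ k / k !) y =
      if i ≤ k then y ^ (k - i) / (k - i)! else 0 := by
  rw [iteratedDeriv_div_const, iteratedDeriv_pow]
  split_ifs with hik
  · rw [← factorial_mul_descFactorial hik]
    have : (k.descFactorial i : ℝ) ≠ 0 :=
      Nat.cast_ne_zero.mpr (descFactorial_eq_zero_iff_lt.not.mpr (not_lt.mpr hik))
    push_cast
    field_simp
  · rw [Nat.descFactorial_eq_zero_iff_lt.mpr (not_le.mp hik)]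
    simp

theorem abs_iteratedDeriv_pow_div_factorial_le {k i j : ℕ} {y : ℝ} (hij : i ≤ j) (hy : 0 ≤ y) :
    |iteratedDeriv i (fun t : ℝ => t ^ k / k !) y| ≤ max y 1 ^ k / (k - j)! := by
  rw [iteratedDeriv_pow_div_factorial]
  split_ifs with hik
  · rw [abs_of_nonneg (by positivity)]
    gcongr
    calc y ^ (k - i) ≤ max y 1 ^ (k - i) := by gcongr; exact le_max_left y 1
      _ ≤ max y 1 ^ k := pow_le_pow_right₀ (le_max_right y 1) (Nat.sub_le k i)
  · rw [abs_zero]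
    positivity

/-- For `k ∈ ℕ`, let `h_k(y) = e^{-y} y^k / k!`. For every `y ≥ 0`:
if `k ≥ 3` then `|h_k'''(y)| ≤ 8 (max y 1)^k / (k-3)!`, and if `k ≤ 2` then
`|h_k'''(y)| ≤ 8 (max y 1)^k`. -/
theorem stmt_7 (k : ℕ) (h : ℝ → ℝ)
    (hdef : ∀ y : ℝ, h y = Real.exp (-y) * y ^ k / (Nat.factorial k : ℝ))
    (y : ℝ) (hy : 0 ≤ y) :
    (3 ≤ k → |iteratedDeriv 3 h y| ≤ 8 * (max y 1) ^ k / (Nat.factorial (k - 3) : ℝ)) ∧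
    (k ≤ 2 → |iteratedDeriv 3 h y| ≤ 8 * (max y 1) ^ k) := by
  have hh : h = fun t => exp (-t) * (t ^ k / k !) := funext fun t => by rw [hdef, mul_div_assoc]
  have hbound : |iteratedDeriv 3 h y| ≤ 8 * max y 1 ^ k / (k - 3)! := by
    rw [hh, mul_div_assoc, show (8 : ℝ) = 2 ^ 3 by norm_num]
    exact abs_iteratedDeriv_exp_neg_mul_le (g := fun t : ℝ => t ^ k / k !) (by fun_prop) hy
      fun i hi => abs_iteratedDeriv_pow_div_factorial_le hi hy
  refine ⟨fun _ => hbound, fun hk => ?_⟩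
  rwa [Nat.sub_eq_zero_of_le (by omega : k ≤ 3), factorial_zero, cast_one, div_one] at hbound
end

section
/- Let r : [0,∞) → ℝ satisfy ∫₀^∞ (1 + v)|r(v)| dv < ∞, let t > 0, and let 0 ≤ u₁ ≤ u₂ ≤ t. Then ε · ∫_{(t−u₂)/ε}^{t/ε} ∫_{(t−u₁)/ε}^{t/ε} r(|s₁ − s₂|) ds₁ ds₂ → 2 u₁ ∫₀^∞ r(v) dv as ε → 0⁺. -/
/-!
Substituting `v = s₁ - s₂`, the double integral becomes `∫ r(|v|) w_ε(v) dv`, where `w_ε(v)` is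
the length of the overlap of the window `((t-u₂)/ε, t/ε]` with the translate by `v` of
`((t-u₁)/ε, t/ε]`. Rescaling by `ε`, `ε w_ε(v)` is the length of the overlap of `(t-u₂, t]` with
`(t-u₁+εv, t+εv]`: it is bounded by `u₁` and tends to `u₁` as `ε → 0`. Dominated convergence and
`∫ r(|v|) dv = 2 ∫₀^∞ r` conclude.
-/

open MeasureTheory Filter Set Topology

theorem MeasureTheory.IntegrableOn.of_one_add_mul_abs {r : ℝ → ℝ} (hrmeas : Measurable r)
    (hr : IntegrableOn (fun v => (1 + v) * |r v|) (Ici 0)) : IntegrableOn r (Ici 0) := by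
  refine hr.mono' hrmeas.aestronglyMeasurable (ae_restrict_of_forall_mem measurableSet_Ici ?_)
  intro v (hv : 0 ≤ v)
  calc ‖r v‖ = 1 * |r v| := (one_mul _).symm
    _ ≤ (1 + v) * |r v| := by gcongr; linarith

theorem integrable_comp_abs {E : Type*} [NormedAddCommGroup E] {f : ℝ → E}
    (hf : IntegrableOn f (Ioi 0)) : Integrable (fun x => f |x|) := by
  have hpos : IntegrableOn (fun x => f |x|) (Ioi 0) :=
    hf.congr_fun (fun x (hx : 0 < x) => by rw [abs_of_pos hx]) measurableSet_Ioi
  have hneg : IntegrableOn (fun x => f |x|) (Iic 0) := by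
    have hneg : MeasurableEmbedding fun x : ℝ => -x := (Homeomorph.neg ℝ).measurableEmbedding
    rw [← Measure.map_neg_eq_self (volume : Measure ℝ), hneg.integrableOn_map_iff]
    simpa [Function.comp_def] using Iff.mpr integrableOn_Ici_iff_integrableOn_Ioi hpos
  rw [← integrableOn_univ, ← Iic_union_Ioi (a := (0 : ℝ))]
  exact hneg.union hpos

section Convolution

variable {G : Type*} [MeasurableSpace G] [AddCommGroup G] [MeasurableAdd₂ G] [MeasurableNeg G]
  {μ : Measure G} [SFinite μ] [μ.IsAddLeftInvariant] [μ.IsNegInvariant]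

theorem integral_integral_sub_eq_integral_measureReal_inter_mul {A B : Set G}
    (hA : μ A ≠ ⊤) (hB : MeasurableSet B) {g : G → ℝ} (hg : Integrable g μ) :
    ∫ x in A, ∫ y in B, g (x - y) ∂μ ∂μ = ∫ v, μ.real (A ∩ (· - v) ⁻¹' B) * g v ∂μ := by
  set F : G → G → ℝ := fun x v => ((· - v) ⁻¹' B).indicator (fun _ => g v) x
  have hinner : ∀ x, ∫ y in B, g (x - y) ∂μ = ∫ v, F x v ∂μ := fun x => by
    rw [← integral_indicator hB, ← integral_sub_left_eq_self _ μ x]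
    congr 1 with v
    by_cases h : x - v ∈ B <;> simp [F, h]
  have : IsFiniteMeasure (μ.restrict A) := isFiniteMeasure_restrict.mpr hA
  have hF : Integrable (Function.uncurry F) ((μ.restrict A).prod μ) := by
    refine (hg.comp_snd (μ.restrict A)).norm.mono' ?_ (ae_of_all _ fun p => ?_)
    · exact hg.aestronglyMeasurable.comp_snd.indicator ((measurable_fst.sub measurable_snd) hB)
    · exact norm_indicator_le_norm_self (fun _ => g p.2) p.1
  calc ∫ x in A, ∫ y in B, g (x - y) ∂μ ∂μ = ∫ x in A, ∫ v, F x v ∂μ ∂μ := by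
        simp only [hinner]
    _ = ∫ v, ∫ x in A, F x v ∂μ ∂μ := integral_integral_swap hF
    _ = ∫ v, μ.real (A ∩ (· - v) ⁻¹' B) * g v ∂μ := by
        congr 1 with v
        rw [setIntegral_indicator (measurable_sub_const v hB), setIntegral_const, smul_eq_mul]

end Convolution

namespace Real

theorem volume_real_Ioc_inter_Ioc (a b c d : ℝ) :
    volume.real (Ioc a b ∩ Ioc c d) = max (min b d - max a c) 0 := by
  rw [Ioc_inter_Ioc, volume_real_Ioc]

theorem mul_volume_real_Ioc_div_inter_preimage_sub {ε : ℝ} (hε : 0 < ε) (a b c d v : ℝ) :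
    ε * volume.real (Ioc (a / ε) (b / ε) ∩ (· - v) ⁻¹' Ioc (c / ε) (d / ε)) =
      volume.real (Ioc a b ∩ Ioc (c + ε * v) (d + ε * v)) := by
  rw [preimage_sub_const_Ioc, volume_real_Ioc_inter_Ioc, volume_real_Ioc_inter_Ioc,
    mul_max_of_nonneg _ _ hε.le, mul_sub, mul_min_of_nonneg _ _ hε.le,
    mul_max_of_nonneg _ _ hε.le]
  simp only [mul_add, mul_div_cancel₀ _ hε.ne', mul_zero, add_comm]

theorem continuous_volume_real_Ioc_inter_Ioc_add_mul (a b c d : ℝ) :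
    Continuous fun p : ℝ × ℝ => volume.real (Ioc a b ∩ Ioc (c + p.1 * p.2) (d + p.1 * p.2)) := by
  simp only [volume_real_Ioc_inter_Ioc]
  fun_prop

theorem tendsto_integral_volume_real_Ioc_inter_Ioc_add_mul_mul {g : ℝ → ℝ}
    (hg : Integrable g) (a b c d : ℝ) :
    Tendsto (fun ε => ∫ v, volume.real (Ioc a b ∩ Ioc (c + ε * v) (d + ε * v)) * g v) (𝓝 0)
      (𝓝 (volume.real (Ioc a b ∩ Ioc c d) * ∫ v, g v)) := by
  have hw := continuous_volume_real_Ioc_inter_Ioc_add_mul a b c d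
  rw [← integral_const_mul]
  refine tendsto_integral_filter_of_dominated_convergence (fun v => max (d - c) 0 * ‖g v‖)
    (Eventually.of_forall fun ε => ?_) (Eventually.of_forall fun ε => ae_of_all _ fun v => ?_)
    (hg.norm.const_mul _) (ae_of_all _ fun v => ?_)
  · exact (hw.comp (Continuous.prodMk_right ε)).aestronglyMeasurable.mul hg.aestronglyMeasurable
  · rw [norm_mul, norm_of_nonneg measureReal_nonneg]
    gcongr
    calc volume.real (Ioc a b ∩ Ioc (c + ε * v) (d + ε * v))
        ≤ volume.real (Ioc (c + ε * v) (d + ε * v)) :=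
          measureReal_mono inter_subset_right measure_Ioc_lt_top.ne
      _ = max (d - c) 0 := by rw [volume_real_Ioc, add_sub_add_right_eq_sub]
  · simpa using ((hw.comp (Continuous.prodMk_left v)).tendsto 0).mul_const (g v)

end Real

theorem stmt_11_general (r : ℝ → ℝ) (hrmeas : Measurable r)
    (hr : IntegrableOn (fun v => (1 + v) * |r v|) (Set.Ici 0))
    (t : ℝ) (u₁ u₂ : ℝ) (hu₁ : 0 ≤ u₁) (hu₁₂ : u₁ ≤ u₂) :
    Tendsto
      (fun ε : ℝ =>
        ε * ∫ s₁ in ((t - u₂) / ε)..(t / ε), ∫ s₂ in ((t - u₁) / ε)..(t / ε), r |s₁ - s₂|)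
      (nhdsWithin 0 (Set.Ioi 0)) (nhds (2 * u₁ * ∫ v in Set.Ioi (0:ℝ), r v)) := by
  have hg : Integrable (fun v => r |v|) :=
    integrable_comp_abs ((hr.of_one_add_mul_abs hrmeas).mono_set Ioi_subset_Ici_self)
  have hlim := Real.tendsto_integral_volume_real_Ioc_inter_Ioc_add_mul_mul hg (t - u₂) t (t - u₁) t
  have hoverlap : volume.real (Ioc (t - u₂) t ∩ Ioc (t - u₁) t) = u₁ := by
    rw [Real.volume_real_Ioc_inter_Ioc, min_self, max_eq_right (show t - u₂ ≤ t - u₁ by linarith)]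
    simp [hu₁]
  rw [hoverlap, integral_comp_abs, ← mul_assoc, mul_comm u₁ 2] at hlim
  refine (hlim.mono_left nhdsWithin_le_nhds).congr' ?_
  filter_upwards [self_mem_nhdsWithin] with ε (hε : 0 < ε)
  have hle : ∀ u, 0 ≤ u → (t - u) / ε ≤ t / ε := fun u hu => by gcongr; linarith
  simp only [intervalIntegral.integral_of_le (hle _ hu₁), intervalIntegral.integral_of_le
    (hle _ (hu₁.trans hu₁₂))]
  rw [integral_integral_sub_eq_integral_measureReal_inter_mul (g := fun v => r |v|)
    measure_Ioc_lt_top.ne measurableSet_Ioc hg, ← integral_const_mul]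
  congr 1 with v
  rw [← mul_assoc, Real.mul_volume_real_Ioc_div_inter_preimage_sub hε]

/-- If `∫₀^∞ (1+v)|r(v)| dv < ∞`, `t > 0`, and `0 ≤ u₁ ≤ u₂ ≤ t`, then
`ε ∫_{(t-u₂)/ε}^{t/ε} ∫_{(t-u₁)/ε}^{t/ε} r(|s₁-s₂|) ds₁ ds₂ → 2 u₁ ∫₀^∞ r(v) dv` as `ε → 0⁺`. -/
theorem stmt_11 (r : ℝ → ℝ) (hrmeas : Measurable r)
    (hr : IntegrableOn (fun v => (1 + v) * |r v|) (Set.Ici 0))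
    (t : ℝ) (ht : 0 < t) (u₁ u₂ : ℝ) (hu₁ : 0 ≤ u₁) (hu₁₂ : u₁ ≤ u₂) (hu₂ : u₂ ≤ t) :
    Tendsto
      (fun ε : ℝ =>
        ε * ∫ s₁ in ((t - u₂) / ε)..(t / ε), ∫ s₂ in ((t - u₁) / ε)..(t / ε), r |s₁ - s₂|)
      (nhdsWithin 0 (Set.Ioi 0)) (nhds (2 * u₁ * ∫ v in Set.Ioi (0:ℝ), r v)) :=
  stmt_11_general r hrmeas hr t u₁ u₂ hu₁ hu₁₂
end

section
/- Let λ : ℝ → [0,∞) be bounded, measurable, and periodic with period 1 (λ(s+1) = λ(s) for all s ≥ 0), and set λ* = ∫₀^1 λ(r) dr; assume λ* > 0. For k ∈ ℕ, define h_k : ℝ → ℝ by h_k(y) = e^{-y} y^k / k!. Fix t > 0 and k ∈ ℕ. Then, as ε → 0⁺, h_k( ∫₀^t λ(s/ε) ds ) = h_k(λ* t) · ( 1 + ε (k/(λ* t) − 1) ∫_{⌊t/ε⌋}^{t/ε} (λ(s) − λ*) ds ) + o(ε), where ⌊x⌋ denotes the greatest integer less than or equal to x. Equivalently, for a Poisson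 process N_ε with deterministic intensity λ_ε(s) = λ(s/ε), P(N_ε(t) = k) = P(N_0(t) = k)( 1 + ε (k/(λ* t) − 1) ∫_{⌊t/ε⌋}^{t/ε} (λ(s) − λ*) ds + o(ε) ), where N_0(t) is Poisson with mean λ* t. -/
open MeasureTheory Filter Asymptotics

/-!
Substituting `s = ε r` gives `∫₀^t λ(s/ε) ds = ε ∫₀^{t/ε} λ`, and splitting `[0, t/ε]` at
`⌊t/ε⌋` turns this, by periodicity, into `λ* t + ε R(ε)` with
`R(ε) = ∫_{⌊t/ε⌋}^{t/ε} (λ - λ*)`, which is bounded since the interval has length `< 1`.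
The claim is then the first-order Taylor expansion of `h_k` at `λ* t`, whose derivative there
is `h_k(λ* t) (k/(λ* t) - 1)`.
-/

lemma intervalIntegrable_of_abs_le {f : ℝ → ℝ} (hf : Measurable f) {C : ℝ}
    (hC : ∀ s, |f s| ≤ C) (u v : ℝ) : IntervalIntegrable f volume u v := by
  refine (intervalIntegrable_const (c := C)).mono_fun hf.aestronglyMeasurable
    (ae_of_all _ fun s => ?_)
  simpa only [Real.norm_eq_abs] using (hC s).trans (le_abs_self C)

section PeriodicOnNonneg

variable {f : ℝ → ℝ} (hper : ∀ s, 0 ≤ s → f (s + 1) = f s)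
include hper

lemma apply_add_natCast_of_periodic_nonneg (n : ℕ) {x : ℝ} (hx : 0 ≤ x) :
    f (x + n) = f x := by
  induction n with
  | zero => simp
  | succ n ih =>
    rw [Nat.cast_succ, ← add_assoc, hper _ (by positivity), ih]

lemma integral_natCast_add_one_of_periodic_nonneg (n : ℕ) :
    ∫ x in (n : ℝ)..n + 1, f x = ∫ x in (0 : ℝ)..1, f x := by
  rw [show (n : ℝ) = 0 + n by ring, show (0 + n : ℝ) + 1 = 1 + n by ring,
    ← intervalIntegral.integral_comp_add_right]
  refine intervalIntegral.integral_congr fun x hx => ?_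
  rw [Set.uIcc_of_le zero_le_one] at hx
  exact apply_add_natCast_of_periodic_nonneg hper n hx.1

lemma integral_zero_natCast_of_periodic_nonneg
    (hint : ∀ u v, IntervalIntegrable f volume u v) (n : ℕ) :
    ∫ x in (0 : ℝ)..n, f x = n * ∫ x in (0 : ℝ)..1, f x := by
  induction n with
  | zero => simp
  | succ n ih =>
    rw [Nat.cast_succ,
      ← intervalIntegral.integral_add_adjacent_intervals (hint 0 n) (hint n (n + 1)), ih,
      integral_natCast_add_one_of_periodic_nonneg hper]
    ring

lemma integral_comp_div_of_periodic_nonneg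
    (hint : ∀ u v, IntervalIntegrable f volume u v) {t ε : ℝ} (ht : 0 ≤ t) (hε : 0 < ε) :
    ∫ s in (0 : ℝ)..t, f (s / ε) =
      (∫ r in (0 : ℝ)..1, f r) * t +
        ε * ∫ s in (⌊t / ε⌋ : ℝ)..(t / ε), (f s - ∫ r in (0 : ℝ)..1, f r) := by
  have hT : 0 ≤ t / ε := div_nonneg ht hε.le
  have hfloor : ((⌊t / ε⌋ : ℤ) : ℝ) = (⌊t / ε⌋₊ : ℕ) := (natCast_floor_eq_intCast_floor hT).symm
  rw [intervalIntegral.integral_comp_div f hε.ne', zero_div, smul_eq_mul,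
    ← intervalIntegral.integral_add_adjacent_intervals (hint 0 ⌊t / ε⌋) (hint _ (t / ε)),
    intervalIntegral.integral_sub (hint _ _) intervalIntegrable_const,
    intervalIntegral.integral_const, smul_eq_mul, hfloor,
    integral_zero_natCast_of_periodic_nonneg hper hint]
  field_simp
  ring

end PeriodicOnNonneg

lemma norm_integral_floor_le {E : Type*} [NormedAddCommGroup E] [NormedSpace ℝ E]
    {f : ℝ → E} {C : ℝ} (hC₀ : 0 ≤ C) (hC : ∀ x, ‖f x‖ ≤ C) (T : ℝ) :
    ‖∫ x in (⌊T⌋ : ℝ)..T, f x‖ ≤ C :=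
  calc ‖∫ x in (⌊T⌋ : ℝ)..T, f x‖ ≤ C * |T - ⌊T⌋| :=
        intervalIntegral.norm_integral_le_of_norm_le_const fun x _ => hC x
    _ ≤ C * 1 := by
        rw [Int.self_sub_floor, abs_of_nonneg (Int.fract_nonneg T)]
        exact mul_le_mul_of_nonneg_left (Int.fract_lt_one T).le hC₀
    _ = C := mul_one C

lemma HasDerivAt.isLittleO_add_sub_sub_of_isBigO {α : Type*} {l : Filter α}
    {h : ℝ → ℝ} {c a : ℝ} (hh : HasDerivAt h c a) {u g : α → ℝ}
    (hug : u =O[l] g) (hg : Tendsto g l (nhds 0)) :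
    (fun x => h (a + u x) - h a - u x * c) =o[l] g :=
  ((hasDerivAt_iff_isLittleO_nhds_zero.mp hh).comp_tendsto
    (hug.trans_tendsto hg)).trans_isBigO hug

lemma hasDerivAt_exp_neg_mul_pow_div_factorial (k : ℕ) {a : ℝ} (ha : a ≠ 0) :
    HasDerivAt (fun y => Real.exp (-y) * y ^ k / k.factorial)
      (Real.exp (-a) * a ^ k / k.factorial * (k / a - 1)) a := by
  have hexp : HasDerivAt (fun y => Real.exp (-y)) (-Real.exp (-a)) a := by
    simpa [Function.comp_def] using (Real.hasDerivAt_exp (-a)).comp a (hasDerivAt_neg a)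
  refine ((hexp.fun_mul (hasDerivAt_pow k a)).div_const (k.factorial : ℝ)).congr_deriv ?_
  rcases k with _ | k
  · simp
  · simp only [Nat.add_sub_cancel, Nat.cast_add, Nat.cast_one, pow_succ]
    field_simp
    ring

/-- First-order refinement in the deterministic periodic setting: for `λ ≥ 0` bounded,
measurable, `1`-periodic on `[0,∞)` with `λ* = ∫₀^1 λ > 0`, `t > 0` and `k ∈ ℕ`,
`h_k(∫₀^t λ(s/ε) ds) = h_k(λ* t) (1 + ε (k/(λ* t) - 1) ∫_{⌊t/ε⌋}^{t/ε} (λ(s)-λ*) ds) + o(ε)`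
as `ε → 0⁺`, where `h_k(y) = e^{-y} y^k / k!`. -/
theorem stmt_13 (lam : ℝ → ℝ) (hmeas : Measurable lam) (hnonneg : ∀ s, 0 ≤ lam s)
    (hbdd : ∃ C : ℝ, ∀ s, lam s ≤ C)
    (hper : ∀ s : ℝ, 0 ≤ s → lam (s + 1) = lam s)
    (lamStar : ℝ) (hstar : lamStar = ∫ r in (0:ℝ)..1, lam r) (hpos : 0 < lamStar)
    (t : ℝ) (ht : 0 < t) (k : ℕ) (h : ℝ → ℝ)
    (hdef : ∀ y : ℝ, h y = Real.exp (-y) * y ^ k / (Nat.factorial k : ℝ)) :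
    (fun ε : ℝ =>
        h (∫ s in (0:ℝ)..t, lam (s / ε)) -
          h (lamStar * t) *
            (1 + ε * ((k : ℝ) / (lamStar * t) - 1) *
              ∫ s in ((⌊t / ε⌋ : ℝ))..(t / ε), (lam s - lamStar)))
      =o[nhdsWithin 0 (Set.Ioi 0)] (fun ε : ℝ => ε) := by
  obtain ⟨C, hC⟩ := hbdd
  have hC₀ : 0 ≤ C := (hnonneg 0).trans (hC 0)
  have habs : ∀ s, |lam s| ≤ C := fun s => abs_le.mpr ⟨by linarith [hnonneg s], hC s⟩
  have hint := intervalIntegrable_of_abs_le hmeas habs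
  set R : ℝ → ℝ := fun ε => ∫ s in ((⌊t / ε⌋ : ℝ))..(t / ε), (lam s - lamStar)
  have hR : (fun ε => ε * R ε) =O[nhdsWithin 0 (Set.Ioi 0)] (fun ε : ℝ => ε) := by
    refine IsBigO.of_bound (C + |lamStar|) (Eventually.of_forall fun ε => ?_)
    rw [norm_mul, mul_comm]
    refine mul_le_mul_of_nonneg_right (norm_integral_floor_le (by positivity) (fun s => ?_) _)
      (norm_nonneg ε)
    exact (norm_sub_le _ _).trans (add_le_add_left (habs s) _)
  have hderiv : HasDerivAt h (h (lamStar * t) * (k / (lamStar * t) - 1)) (lamStar * t) := by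
    rw [funext hdef]
    exact hasDerivAt_exp_neg_mul_pow_div_factorial k (mul_pos hpos ht).ne'
  refine (hderiv.isLittleO_add_sub_sub_of_isBigO hR
    (tendsto_id.mono_left nhdsWithin_le_nhds)).congr' ?_ EventuallyEq.rfl
  filter_upwards [self_mem_nhdsWithin] with ε hε
  rw [integral_comp_div_of_periodic_nonneg hper hint ht.le hε, ← hstar]
  ring
end
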